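/- arXiv:2203.14596 — 5 statements merged into one kernel-verified Lean document; each statement's English description precedes it below -/
import Mathlib

section
/- The key identity in the proof of concavity of Λ: for θ₁ + θ₂ = 1 with θ₁, θ₂ ≥ 0, ρ₁, ρ₂ > 0 and momenta m₁, m₂ ∈ ℝ, Λ(θ₁U₁ + θ₂U₂) - θ₁Λ(U₁) - θ₂Λ(U₂) = (θ₁θ₂ / (θ₁ρ₁ + θ₂ρ₂)) · (m₁√(ρ₂/ρ₁) - m₂√(ρ₁/ρ₂))² / 2, where Uₖ = (ρₖ, mₖ, Eₖ) and Λ(ρ,m,E) = E - m²/(2ρ). -/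
/-- `Λ(ρ, m, E) = E - m²/(2ρ)` -/
noncomputable def Lam (ρ m E : ℝ) : ℝ := E - m^2 / (2 * ρ)

lemma Lam_lincomb_sub_lincomb_Lam {θ₁ θ₂ ρ₁ ρ₂ : ℝ} (m₁ m₂ E₁ E₂ : ℝ) (hρ₁ : ρ₁ ≠ 0) (hρ₂ : ρ₂ ≠ 0)
    (hρ : θ₁ * ρ₁ + θ₂ * ρ₂ ≠ 0) :
    Lam (θ₁ * ρ₁ + θ₂ * ρ₂) (θ₁ * m₁ + θ₂ * m₂) (θ₁ * E₁ + θ₂ * E₂)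
      - θ₁ * Lam ρ₁ m₁ E₁ - θ₂ * Lam ρ₂ m₂ E₂
    = θ₁ * θ₂ * (m₁ * ρ₂ - m₂ * ρ₁) ^ 2 / (2 * ρ₁ * ρ₂ * (θ₁ * ρ₁ + θ₂ * ρ₂)) := by
  unfold Lam
  field_simp
  ring

lemma sq_mul_sqrt_div_sub_mul_sqrt_div {ρ₁ ρ₂ : ℝ} (m₁ m₂ : ℝ) (hρ₁ : 0 < ρ₁) (hρ₂ : 0 < ρ₂) :
    (m₁ * √(ρ₂ / ρ₁) - m₂ * √(ρ₁ / ρ₂)) ^ 2 = (m₁ * ρ₂ - m₂ * ρ₁) ^ 2 / (ρ₁ * ρ₂) := by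
  have hsq₁ : √(ρ₂ / ρ₁) ^ 2 = ρ₂ / ρ₁ := Real.sq_sqrt (div_pos hρ₂ hρ₁).le
  have hsq₂ : √(ρ₁ / ρ₂) ^ 2 = ρ₁ / ρ₂ := Real.sq_sqrt (div_pos hρ₁ hρ₂).le
  have hprod : √(ρ₂ / ρ₁) * √(ρ₁ / ρ₂) = 1 := by
    rw [← Real.sqrt_mul (div_pos hρ₂ hρ₁).le, div_mul_div_comm, mul_comm ρ₂,
      div_self (by positivity), Real.sqrt_one]
  calc (m₁ * √(ρ₂ / ρ₁) - m₂ * √(ρ₁ / ρ₂)) ^ 2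
      = m₁ ^ 2 * (ρ₂ / ρ₁) - 2 * m₁ * m₂ + m₂ ^ 2 * (ρ₁ / ρ₂) := by
        linear_combination m₁ ^ 2 * hsq₁ + m₂ ^ 2 * hsq₂ - 2 * m₁ * m₂ * hprod
    _ = (m₁ * ρ₂ - m₂ * ρ₁) ^ 2 / (ρ₁ * ρ₂) := by
        field_simp
        ring

theorem stmt_1_general (θ₁ θ₂ : ℝ) (hθ₁ : 0 ≤ θ₁) (hθ₂ : 0 ≤ θ₂)
    (ρ₁ ρ₂ m₁ m₂ E₁ E₂ : ℝ) (hρ₁ : 0 < ρ₁) (hρ₂ : 0 < ρ₂) :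
    Lam (θ₁ * ρ₁ + θ₂ * ρ₂) (θ₁ * m₁ + θ₂ * m₂) (θ₁ * E₁ + θ₂ * E₂)
      - θ₁ * Lam ρ₁ m₁ E₁ - θ₂ * Lam ρ₂ m₂ E₂
    = (θ₁ * θ₂ / (θ₁ * ρ₁ + θ₂ * ρ₂)) *
        (m₁ * Real.sqrt (ρ₂ / ρ₁) - m₂ * Real.sqrt (ρ₁ / ρ₂))^2 / 2 := by
  rw [sq_mul_sqrt_div_sub_mul_sqrt_div m₁ m₂ hρ₁ hρ₂]
  by_cases hρ : θ₁ * ρ₁ + θ₂ * ρ₂ = 0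
  -- Only `θ₁ = θ₂ = 0` makes the denominator vanish; the right side is then `0` via `x / 0 = 0`.
  · obtain ⟨rfl, rfl⟩ : θ₁ = 0 ∧ θ₂ = 0 := by
      constructor <;> nlinarith [mul_nonneg hθ₁ hρ₁.le, mul_nonneg hθ₂ hρ₂.le]
    simp [Lam]
  · rw [Lam_lincomb_sub_lincomb_Lam m₁ m₂ E₁ E₂ hρ₁.ne' hρ₂.ne' hρ]
    field_simp

/-- Key identity in the proof of concavity of `Λ`. -/
theorem stmt_1 (θ₁ θ₂ : ℝ) (hθ₁ : 0 ≤ θ₁) (hθ₂ : 0 ≤ θ₂) (hsum : θ₁ + θ₂ = 1)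
    (ρ₁ ρ₂ m₁ m₂ E₁ E₂ : ℝ) (hρ₁ : 0 < ρ₁) (hρ₂ : 0 < ρ₂) :
    Lam (θ₁ * ρ₁ + θ₂ * ρ₂) (θ₁ * m₁ + θ₂ * m₂) (θ₁ * E₁ + θ₂ * E₂)
      - θ₁ * Lam ρ₁ m₁ E₁ - θ₂ * Lam ρ₂ m₂ E₂
    = (θ₁ * θ₂ / (θ₁ * ρ₁ + θ₂ * ρ₂)) *
        (m₁ * Real.sqrt (ρ₂ / ρ₁) - m₂ * Real.sqrt (ρ₁ / ρ₂))^2 / 2 :=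
  stmt_1_general θ₁ θ₂ hθ₁ hθ₂ ρ₁ ρ₂ m₁ m₂ E₁ E₂ hρ₁ hρ₂
end

section
/- Let S : (0,∞)³ → ℝ be a concave function that is nondecreasing in its third argument. Then the function η(ρ, q, m, E) = S(ρ, q, E - m²/(2ρ)), defined for ρ > 0 and E - m²/(2ρ) > 0, is concave in (ρ, q, m, E). -/
/-!
The kinetic energy `m² / (2ρ)` is jointly convex on `ρ > 0` (Cauchy–Schwarz), so
`Λ = E - m² / (2ρ)` is concave. The map `(ρ, q, m, E) ↦ (ρ, q, Λ)` is affine in its first two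
components and concave in the last, and composing it with a concave `S` that is nondecreasing in
its last argument preserves concavity.
-/

theorem convexOn_sq_div_two_mul :
    ConvexOn ℝ {p : ℝ × ℝ | 0 < p.1} (fun p => p.2 ^ 2 / (2 * p.1)) := by
  refine ⟨convex_halfSpace_gt (LinearMap.fst ℝ ℝ ℝ).isLinear 0, ?_⟩
  rintro ⟨ρ, m⟩ (hρ : 0 < ρ) ⟨ρ', m'⟩ (hρ' : 0 < ρ') a b ha hb hab
  simp only [Prod.smul_mk, Prod.mk_add_mk, smul_eq_mul]
  have hρmix : 0 < a * ρ + b * ρ' := convex_Ioi (0 : ℝ) hρ hρ' ha hb hab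
  rw [mul_div_assoc', mul_div_assoc', div_add_div _ _ (by positivity) (by positivity),
    div_le_div_iff₀ (by positivity) (by positivity)]
  -- the difference of the two sides is a multiple of `a b (m ρ' - m' ρ)²`
  nlinarith [mul_nonneg (mul_nonneg ha hb) (sq_nonneg (m * ρ' - m' * ρ)),
    mul_pos hρ hρ', mul_pos hρmix (mul_pos hρ hρ')]

theorem concaveOn_sub_sq_div_two_mul :
    ConcaveOn ℝ {p : ℝ × ℝ × ℝ × ℝ | 0 < p.1}
      (fun p => p.2.2.2 - p.2.2.1 ^ 2 / (2 * p.1)) :=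
  ((LinearMap.snd ℝ ℝ ℝ ∘ₗ LinearMap.snd ℝ ℝ _ ∘ₗ LinearMap.snd ℝ ℝ _).concaveOn
    (convex_halfSpace_gt (LinearMap.fst ℝ ℝ _).isLinear 0)).sub
    (convexOn_sq_div_two_mul.comp_linearMap
      ((LinearMap.fst ℝ ℝ _).prod
        (LinearMap.fst ℝ ℝ ℝ ∘ₗ LinearMap.snd ℝ ℝ _ ∘ₗ LinearMap.snd ℝ ℝ _)))

section Composition

variable {𝕜 E F G β : Type*} [Ring 𝕜] [PartialOrder 𝕜]
  [AddCommGroup E] [Module 𝕜 E] [AddCommGroup F] [Module 𝕜 F]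
  [AddCommMonoid G] [PartialOrder G] [Module 𝕜 G]
  [AddCommMonoid β] [PartialOrder β] [Module 𝕜 β]

theorem ConcaveOn.comp_affineMap_prod_of_monotone_snd {s : Set E} {t : Set (F × G)}
    {S : F × G → β} {f : E → G} (ℓ : E →ᵃ[𝕜] F) (hS : ConcaveOn 𝕜 t S)
    (ht : ∀ y e₁ e₂, (y, e₁) ∈ t → e₁ ≤ e₂ → (y, e₂) ∈ t)
    (hS_mono : ∀ y e₁ e₂, (y, e₁) ∈ t → e₁ ≤ e₂ → S (y, e₁) ≤ S (y, e₂))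
    (hf : ConcaveOn 𝕜 s f) (hs : ∀ x, (ℓ x, f x) ∈ t → x ∈ s) :
    ConcaveOn 𝕜 {x | (ℓ x, f x) ∈ t} (fun x => S (ℓ x, f x)) := by
  have hcomb : ∀ ⦃x y : E⦄ ⦃a b : 𝕜⦄, a + b = 1 →
      a • (ℓ x, f x) + b • (ℓ y, f y) = (ℓ (a • x + b • y), a • f x + b • f y) :=
    fun x y a b hab => by simp [Convex.combo_affine_apply hab]
  refine ⟨fun x hx y hy a b ha hb hab => ?_, fun x hx y hy a b ha hb hab => ?_⟩
  · exact ht _ _ _ (hcomb hab ▸ hS.1 hx hy ha hb hab) (hf.2 (hs x hx) (hs y hy) ha hb hab)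
  · exact (hcomb hab ▸ hS.2 hx hy ha hb hab).trans
      (hS_mono _ _ _ (hcomb hab ▸ hS.1 hx hy ha hb hab) (hf.2 (hs x hx) (hs y hy) ha hb hab))

end Composition

/-- If `S` is concave on `(0,∞)³` and nondecreasing in its third argument, then
`η(ρ, q, m, E) = S(ρ, q, E - m²/(2ρ))` is concave on its natural domain. -/
theorem stmt_4 (S : ℝ → ℝ → ℝ → ℝ)
    (hconc : ConcaveOn ℝ {p : ℝ × ℝ × ℝ | 0 < p.1 ∧ 0 < p.2.1 ∧ 0 < p.2.2}
      (fun p => S p.1 p.2.1 p.2.2))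
    (hmono : ∀ ρ q : ℝ, 0 < ρ → 0 < q →
      ∀ e₁ e₂ : ℝ, 0 < e₁ → e₁ ≤ e₂ → S ρ q e₁ ≤ S ρ q e₂) :
    ConcaveOn ℝ
      {p : ℝ × ℝ × ℝ × ℝ | 0 < p.1 ∧ 0 < p.2.1 ∧ 0 < p.2.2.2 - p.2.2.1^2 / (2 * p.1)}
      (fun p => S p.1 p.2.1 (p.2.2.2 - p.2.2.1^2 / (2 * p.1))) := by
  have hS : ConcaveOn ℝ {p : (ℝ × ℝ) × ℝ | 0 < p.1.1 ∧ 0 < p.1.2 ∧ 0 < p.2}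
      (fun p => S p.1.1 p.1.2 p.2) :=
    hconc.comp_linearMap (LinearEquiv.prodAssoc ℝ ℝ ℝ ℝ).toLinearMap
  exact hS.comp_affineMap_prod_of_monotone_snd
    ((LinearMap.fst ℝ ℝ _).prod (LinearMap.fst ℝ ℝ _ ∘ₗ LinearMap.snd ℝ ℝ _)).toAffineMap
    (fun _ _ _ he hle => ⟨he.1, he.2.1, he.2.2.trans_le hle⟩)
    (fun y _ _ he hle => hmono y.1 y.2 he.1 he.2.1 _ _ he.2.2 hle)
    concaveOn_sub_sq_div_two_mul (by exact fun _ hp => hp.1)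
end

section
/- In the advection step of the FSLP scheme, the specific volume update is a convex combination: if ρ_j 𝒯_j = 1 for all j, ρ_j^A > 0, and 𝒯_j^A := (ρ_j 𝒯_j - λ(u₊⁺·ρ_j𝒯_j + u₊⁻·ρ_{j+1}𝒯_{j+1} - u₋⁺·ρ_{j-1}𝒯_{j-1} - u₋⁻·ρ_j𝒯_j)) / ρ_j^A with ρ_j^A = ρ_j - λ(u₊⁻ρ_{j+1} + u₊⁺ρ_j - u₋⁺ρ_{j-1} - u₋⁻ρ_j), where u₊ = u*_{j+1/2}, u₋ = u*_{j-1/2}, x⁺ = max(x,0), x⁻ = min(x,0), λ = Δt/((1-α)Δx), then 𝒯_j^A = λ_j^{(+1)}𝒯_{j+1} + λ_j^{(0)}𝒯_j + λ_j^{(-1)}𝒯_{j-1} where λ_j^{(+1)} = -λ u₊⁻ ρ_{j+1}/ρ_j^A, λ_j^{(-1)} = λ u₋⁺ ρ_{j-1}/ρ_j^A, λ_j^{(0)} = (1 - λ(u₊⁺ - u₋⁻)) ρ_j/ρ_j^A, and λ^{(+1)} + λ^{(0)} + λ^{(-1)} = 1. -/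
theorem stmt_7_general (ρm ρ0 ρp Tm T0 Tp lam up um ρA : ℝ)
    (hρA : ρA = ρ0 - lam * (min up 0 * ρp + max up 0 * ρ0 - max um 0 * ρm - min um 0 * ρ0))
    (hApos : 0 < ρA)
    (TA : ℝ)
    (hTA : TA = (ρ0 * T0 - lam * (max up 0 * (ρ0 * T0) + min up 0 * (ρp * Tp)
      - max um 0 * (ρm * Tm) - min um 0 * (ρ0 * T0))) / ρA) :
    TA = (-(lam * min up 0) * ρp / ρA) * Tp
        + ((1 - lam * (max up 0 - min um 0)) * ρ0 / ρA) * T0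
        + ((lam * max um 0) * ρm / ρA) * Tm ∧
      (-(lam * min up 0) * ρp / ρA)
        + ((1 - lam * (max up 0 - min um 0)) * ρ0 / ρA)
        + ((lam * max um 0) * ρm / ρA) = 1 := by
  constructor
  · rw [hTA]
    ring
  · rw [← add_div, ← add_div, div_eq_one_iff_eq hApos.ne', hρA]
    ring

/-- The FSLP advection update of the surrogate specific volume `𝒯` is a convex
combination of its neighboring values. -/
theorem stmt_7 (ρm ρ0 ρp Tm T0 Tp lam up um ρA : ℝ)
    (hm : ρm * Tm = 1) (h0 : ρ0 * T0 = 1) (hp : ρp * Tp = 1)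
    (hρA : ρA = ρ0 - lam * (min up 0 * ρp + max up 0 * ρ0 - max um 0 * ρm - min um 0 * ρ0))
    (hApos : 0 < ρA)
    (TA : ℝ)
    (hTA : TA = (ρ0 * T0 - lam * (max up 0 * (ρ0 * T0) + min up 0 * (ρp * Tp)
      - max um 0 * (ρm * Tm) - min um 0 * (ρ0 * T0))) / ρA) :
    TA = (-(lam * min up 0) * ρp / ρA) * Tp
        + ((1 - lam * (max up 0 - min um 0)) * ρ0 / ρA) * T0
        + ((lam * max um 0) * ρm / ρA) * Tm ∧
      (-(lam * min up 0) * ρp / ρA)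
        + ((1 - lam * (max up 0 - min um 0)) * ρ0 / ρA)
        + ((lam * max um 0) * ρm / ρA) = 1 :=
  stmt_7_general ρm ρ0 ρp Tm T0 Tp lam up um ρA hρA hApos TA hTA
end

section
/- Under the transport CFL condition 1 - λ(u₊⁺ - u₋⁻) ≥ 0 (with λ = Δt/((1-α)Δx), u₊ = u*_{j+1/2}, u₋ = u*_{j-1/2}), the updated density ρ_j^A = ρ_j - λ(u₊⁻ρ_{j+1} + u₊⁺ρ_j - u₋⁺ρ_{j-1} - u₋⁻ρ_j) is a nonnegative linear combination of ρ_{j-1}, ρ_j, ρ_{j+1}; in particular if ρ_{j-1}, ρ_j, ρ_{j+1} > 0 and the CFL inequality is strict, then ρ_j^A > 0. -/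
/-! Expanding the update gives
`ρ_j^A = (-λ u₊⁻) ρ_{j+1} + (λ u₋⁺) ρ_{j-1} + (1 - λ (u₊⁺ - u₋⁻)) ρ_j`.
The first two coefficients are nonnegative because `x⁻ ≤ 0 ≤ x⁺` and `λ > 0`, and the last one
is the CFL quantity, so positivity of the neighbouring densities propagates to `ρ_j^A`. -/

theorem upwind_update_eq (ρm ρ0 ρp lam up um : ℝ) :
    ρ0 - lam * (min up 0 * ρp + max up 0 * ρ0 - max um 0 * ρm - min um 0 * ρ0) =
      -(lam * min up 0) * ρp + lam * max um 0 * ρm + (1 - lam * (max up 0 - min um 0)) * ρ0 := by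
  ring

theorem neg_mul_min_zero_nonneg {lam : ℝ} (hlam : 0 ≤ lam) (u : ℝ) : 0 ≤ -(lam * min u 0) :=
  neg_nonneg.2 (mul_nonpos_of_nonneg_of_nonpos hlam (min_le_right u 0))

theorem mul_max_zero_nonneg {lam : ℝ} (hlam : 0 ≤ lam) (u : ℝ) : 0 ≤ lam * max u 0 :=
  mul_nonneg hlam (le_max_right u 0)

/-- Under the transport CFL condition the advected density is a nonnegative
combination of the neighboring densities; positivity under strict CFL. -/
theorem stmt_8 (ρm ρ0 ρp lam up um : ℝ) (hlam : 0 < lam)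
    (hCFL : 0 ≤ 1 - lam * (max up 0 - min um 0)) :
    (0 ≤ -(lam * min up 0) ∧ 0 ≤ lam * max um 0 ∧ 0 ≤ 1 - lam * (max up 0 - min um 0)) ∧
      (0 < ρm → 0 < ρ0 → 0 < ρp → 0 < 1 - lam * (max up 0 - min um 0) →
        0 < ρ0 - lam * (min up 0 * ρp + max up 0 * ρ0 - max um 0 * ρm - min um 0 * ρ0)) := by
  have hp := neg_mul_min_zero_nonneg hlam.le up
  have hm := mul_max_zero_nonneg hlam.le um
  refine ⟨⟨hp, hm, hCFL⟩, fun hρm hρ0 hρp hstrict => ?_⟩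
  rw [upwind_update_eq]
  exact add_pos_of_nonneg_of_pos
    (add_nonneg (mul_nonneg hp hρp.le) (mul_nonneg hm hρm.le)) (mul_pos hstrict hρ0)
end

section
/- For the pressure subsystem's intermediate states, one has the sign result of the function χ: assume p^EOS(·, s_R) is C¹ and strictly decreasing on an interval containing 𝒯_R and 𝒯_R*, and that 1 - (ρc)²(𝒯, s_R)/a² > 0 for all such 𝒯 (i.e., a dominates the Lagrangian sound speed). Define χ(𝒯) = e^EOS(𝒯, s_R) - p^EOS(𝒯, s_R)²/(2a²) - e^EOS(𝒯_R*, s_R) + p^EOS(𝒯_R*, s_R)²/(2a²) + p^EOS(𝒯_R*, s_R)(𝒯 + p^EOS(𝒯,s_R)/a² - 𝒯_R* - p^EOS(𝒯_R*,s_R)/a²). If χ'(𝒯) = (p^EOS(𝒯_R*, s_R) - p^EOS(𝒯, s_R))(1 - ρ²c²(𝒯, s_R)/a²) and 𝒯_R ≠ 𝒯_R*, then χ(𝒯_R) > 0. -/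
/-! `χ` vanishes at `𝒯_R*`, and its derivative has the sign of `𝒯 - 𝒯_R*` because `p` is
strictly decreasing and `1 - (ρc)²/a² > 0`; so `χ` strictly increases as `𝒯` moves away from
`𝒯_R*` on either side, and `χ(𝒯_R) > 0`. -/

open Set

theorem StrictAntiOn.sub_mul_sub_pos {f : ℝ → ℝ} {s : Set ℝ} (hf : StrictAntiOn f s)
    {c x : ℝ} (hc : c ∈ s) (hx : x ∈ s) (hxc : x ≠ c) : 0 < (x - c) * (f c - f x) := by
  rcases hxc.lt_or_gt with h | h
  · exact mul_pos_of_neg_of_neg (sub_neg.2 h) (sub_neg.2 (hf hx hc h))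
  · exact mul_pos (sub_pos.2 h) (sub_pos.2 (hf hc hx h))

theorem lt_of_hasDerivAt_of_sub_mul_pos {f f' : ℝ → ℝ} {c d : ℝ} (hdc : d ≠ c)
    (hf : ∀ x ∈ uIcc c d, HasDerivAt f (f' x) x)
    (hsign : ∀ x ∈ uIcc c d, x ≠ c → 0 < (x - c) * f' x) : f c < f d := by
  have hcont : ContinuousOn f (uIcc c d) := fun x hx => (hf x hx).continuousAt.continuousWithinAt
  rcases hdc.lt_or_gt with h | h
  · rw [uIcc_of_ge h.le] at hf hsign hcont
    refine strictAntiOn_of_hasDerivWithinAt_neg (convex_Icc d c) hcont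
      (fun x hx => (hf x (interior_subset hx)).hasDerivWithinAt) (fun x hx => ?_)
      (left_mem_Icc.2 h.le) (right_mem_Icc.2 h.le) h
    rw [interior_Icc] at hx
    exact neg_of_mul_pos_right (hsign x (Ioo_subset_Icc_self hx) hx.2.ne) (sub_nonpos.2 hx.2.le)
  · rw [uIcc_of_le h.le] at hf hsign hcont
    refine strictMonoOn_of_hasDerivWithinAt_pos (convex_Icc c d) hcont
      (fun x hx => (hf x (interior_subset hx)).hasDerivWithinAt) (fun x hx => ?_)
      (left_mem_Icc.2 h.le) (right_mem_Icc.2 h.le) h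
    rw [interior_Icc] at hx
    exact pos_of_mul_pos_right (hsign x (Ioo_subset_Icc_self hx) hx.1.ne') (sub_nonneg.2 hx.1.le)

open Set in
theorem stmt_12_general (a TR TRs : ℝ) (hne : TR ≠ TRs)
    (eEOS pEOS rc2 : ℝ → ℝ)
    (hp : StrictAntiOn pEOS (Set.uIcc TRs TR))
    (hrc : ∀ T ∈ Set.uIcc TRs TR, 0 < 1 - rc2 T / a^2)
    (χ : ℝ → ℝ)
    (hχ : χ = fun T => eEOS T - (pEOS T)^2 / (2 * a^2) - eEOS TRs + (pEOS TRs)^2 / (2 * a^2)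
      + pEOS TRs * (T + pEOS T / a^2 - TRs - pEOS TRs / a^2))
    (hχ' : ∀ T ∈ Set.uIcc TRs TR,
      HasDerivAt χ ((pEOS TRs - pEOS T) * (1 - rc2 T / a^2)) T) :
    0 < χ TR := by
  have hχ_TRs : χ TRs = 0 := by simp [hχ]
  refine hχ_TRs ▸ lt_of_hasDerivAt_of_sub_mul_pos hne hχ' fun T hT hTne => ?_
  rw [← mul_assoc]
  exact mul_pos (hp.sub_mul_sub_pos left_mem_uIcc hT hTne) (hrc T hT)

open Set in
/-- Sign of the function `χ` in the entropy estimate for the pressure subsystem. -/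
theorem stmt_12 (a TR TRs : ℝ) (ha : 0 < a) (hne : TR ≠ TRs)
    (eEOS pEOS rc2 : ℝ → ℝ)
    (hp : StrictAntiOn pEOS (Set.uIcc TRs TR))
    (hrc : ∀ T ∈ Set.uIcc TRs TR, 0 < 1 - rc2 T / a^2)
    (χ : ℝ → ℝ)
    (hχ : χ = fun T => eEOS T - (pEOS T)^2 / (2 * a^2) - eEOS TRs + (pEOS TRs)^2 / (2 * a^2)
      + pEOS TRs * (T + pEOS T / a^2 - TRs - pEOS TRs / a^2))
    (hχ' : ∀ T ∈ Set.uIcc TRs TR,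
      HasDerivAt χ ((pEOS TRs - pEOS T) * (1 - rc2 T / a^2)) T) :
    0 < χ TR :=
  stmt_12_general a TR TRs hne eEOS pEOS rc2 hp hrc χ hχ hχ'
end
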